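/- Let φ be a permutation of a set X, let S = X/φ be its set of orbits and S_fin ⊆ S the finite orbits. Then the homology of the mapping torus of φ satisfies H_0 ≅ ℤS, H_1 ≅ ℤS_fin, and H_n = 0 for n ≥ 2. -/

import Mathlib

/-!
The complex is `ℤX --(1 - φ_*)--> ℤX`, concentrated in degrees one and zero. Its cokernel is free
on the orbits of `φ`: an orbit lifts to the class of any of its points, and these classes agree
because `x - φ x` is a boundary. Its kernel consists of the finitely supported functions constant
on orbits; such a function vanishes on every infinite orbit, so it is determined by its values on
representatives of the finite orbits, and every choice of values is realised by orbit indicators.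
-/

open CategoryTheory

/-- The orbit equivalence relation of a permutation. -/
def orbSetoid {X : Type} (φ : X ≃ X) : Setoid X where
  r x y := ∃ k : ℤ, (φ ^ k) x = y
  iseqv := by
    constructor
    · exact fun x => ⟨0, rfl⟩
    · rintro x y ⟨k, rfl⟩
      exact ⟨-k, by simp [← Equiv.Perm.mul_apply, ← zpow_add]⟩
    · rintro x y z ⟨k, rfl⟩ ⟨l, rfl⟩
      exact ⟨l + k, by simp [← Equiv.Perm.mul_apply, ← zpow_add]⟩

/-- The modules of the cellular chain complex of the mapping torus `X ⫽ φ` of a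
permutation `φ` of a discrete set `X`: one `0`-cell and one `1`-cell for each point. -/
noncomputable def torusModule (X : Type) : ℕ → ModuleCat ℤ
  | 0 => ModuleCat.of ℤ (X →₀ ℤ)
  | 1 => ModuleCat.of ℤ (X →₀ ℤ)
  | (_+2) => ModuleCat.of ℤ PUnit

/-- The differentials: `1 − φ_*` in degree one, zero above. -/
noncomputable def torusDiff {X : Type} (φ : X ≃ X) :
    (n : ℕ) → (torusModule X (n+1) ⟶ torusModule X n)
  | 0 => ModuleCat.ofHom (LinearMap.id - Finsupp.lmapDomain ℤ ℤ ⇑φ : (X →₀ ℤ) →ₗ[ℤ] (X →₀ ℤ))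
  | (_+1) => 0

/-- The cellular chain complex of the mapping torus of `φ : X → X`, `X` discrete:
`⋯ → 0 → ℤX --(1−φ_*)--> ℤX`. -/
noncomputable def mappingTorusComplex (X : Type) (φ : X ≃ X) : ChainComplex (ModuleCat ℤ) ℕ :=
  ChainComplex.of (torusModule X) (torusDiff φ) (fun n => by
    show (0 : torusModule X (n+2) ⟶ torusModule X (n+1)) ≫ _ = 0
    simp)

namespace Equiv.Perm

theorem apply_zpow_apply_of_invariant {α β : Type*} {φ : Perm α} {g : α → β}
    (hg : ∀ x, g (φ x) = g x) (k : ℤ) (x : α) : g ((φ ^ k) x) = g x := by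
  induction k using Int.induction_on generalizing x with
  | zero => rfl
  | succ i ih => rw [zpow_add_one, mul_apply, ih, hg]
  | pred i ih =>
    rw [zpow_sub_one, mul_apply, ih]
    simpa using (hg (φ⁻¹ x)).symm

theorem SameCycle.apply_eq_of_invariant {α β : Type*} {φ : Perm α} {g : α → β}
    (hg : ∀ x, g (φ x) = g x) {x y : α} (h : φ.SameCycle x y) : g x = g y := by
  obtain ⟨k, rfl⟩ := h
  exact (apply_zpow_apply_of_invariant hg k x).symm

end Equiv.Perm

section Orbits

variable {X : Type} (φ : Equiv.Perm X)

theorem orbSetoid_mk_eq_iff {x y : X} :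
    Quotient.mk (orbSetoid φ) x = Quotient.mk (orbSetoid φ) y ↔ φ.SameCycle x y :=
  Quotient.eq

theorem orbSetoid_mk_apply (x : X) : Quotient.mk (orbSetoid φ) (φ x) = Quotient.mk _ x :=
  (orbSetoid_mk_eq_iff φ).2 (Equiv.Perm.sameCycle_apply_left.2 .rfl)

theorem sameCycle_out_mk (x : X) : φ.SameCycle (Quotient.mk (orbSetoid φ) x).out x :=
  (orbSetoid_mk_eq_iff φ).1 (Quotient.out_eq _)

abbrev FiniteOrbit : Type :=
  {s : Quotient (orbSetoid φ) // {x : X | Quotient.mk (orbSetoid φ) x = s}.Finite}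

end Orbits

section Finsupp

variable (R : Type*) [Ring R] {X : Type} (φ : Equiv.Perm X)

variable {R} in
theorem mem_ker_id_sub_lmapDomain_iff (f : X →₀ R) :
    f ∈ LinearMap.ker (LinearMap.id - Finsupp.lmapDomain R R φ) ↔ ∀ x, f (φ x) = f x := by
  rw [LinearMap.mem_ker, LinearMap.sub_apply, sub_eq_zero, Finsupp.ext_iff,
    ← φ.forall_congr_right]
  simp [Finsupp.mapDomain_apply φ.injective]

variable {R} in
theorem single_sub_single_apply_mem_range (x : X) (r : R) :
    Finsupp.single x r - Finsupp.single (φ x) r ∈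
      LinearMap.range (LinearMap.id - Finsupp.lmapDomain R R φ) :=
  ⟨Finsupp.single x r, by simp⟩

noncomputable def quotientRangeEquivOrbits :
    ((X →₀ R) ⧸ LinearMap.range (LinearMap.id - Finsupp.lmapDomain R R φ)) ≃ₗ[R]
      (Quotient (orbSetoid φ) →₀ R) := by
  set N := LinearMap.range (LinearMap.id - Finsupp.lmapDomain R R φ)
  have hN : N ≤ LinearMap.ker (Finsupp.lmapDomain R R (Quotient.mk (orbSetoid φ))) := by
    rintro _ ⟨f, rfl⟩
    simp [Finsupp.mapDomain_sub, ← Finsupp.mapDomain_comp, Function.comp_def,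
      orbSetoid_mk_apply]
  have hclass : ∀ x : X, N.mkQ (Finsupp.single (Quotient.mk (orbSetoid φ) x).out 1) =
      N.mkQ (Finsupp.single x 1) :=
    fun x => (sameCycle_out_mk φ x).apply_eq_of_invariant (g := fun y => N.mkQ (.single y 1))
      fun y => (Submodule.Quotient.eq N).2 <| by
        simpa only [neg_sub] using neg_mem (single_sub_single_apply_mem_range φ y (1 : R))
  refine LinearEquiv.ofLinearMap (N.liftQ _ hN)
    (Finsupp.linearCombination R fun s => N.mkQ (Finsupp.single s.out 1)) ?_ ?_
  · ext s
    simp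
  · refine Submodule.linearMap_qext _ (Finsupp.lhom_ext' fun x => LinearMap.ext_ring ?_)
    simpa using hclass x

variable {R} in
theorem apply_eq_zero_of_invariant_of_infinite {f : X →₀ R} (hf : ∀ x, f (φ x) = f x) {x : X}
    (hx : ¬ {y | Quotient.mk (orbSetoid φ) y = Quotient.mk _ x}.Finite) : f x = 0 := by
  by_contra h
  refine hx (f.hasFiniteSupport.subset fun y hy => ?_)
  rwa [Function.mem_support, ((orbSetoid_mk_eq_iff φ).1 hy).apply_eq_of_invariant hf]

noncomputable def orbitIndicator (s : FiniteOrbit φ) : X →₀ R :=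
  Finsupp.indicator s.2.toFinset fun _ _ => 1

open scoped Classical in
theorem orbitIndicator_apply (s : FiniteOrbit φ) (x : X) :
    orbitIndicator R φ s x = if Quotient.mk (orbSetoid φ) x = s.1 then 1 else 0 := by
  simp [orbitIndicator, Finsupp.indicator_apply]

theorem orbitIndicator_mem_ker (s : FiniteOrbit φ) :
    orbitIndicator R φ s ∈ LinearMap.ker (LinearMap.id - Finsupp.lmapDomain R R φ) :=
  (mem_ker_id_sub_lmapDomain_iff φ _).2 fun x => by
    rw [orbitIndicator_apply, orbitIndicator_apply, orbSetoid_mk_apply]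

theorem out_finiteOrbit_injective : Function.Injective fun s : FiniteOrbit φ => s.1.out :=
  Quotient.out_injective.comp Subtype.val_injective

noncomputable def kerEquivFiniteOrbits :
    LinearMap.ker (LinearMap.id - Finsupp.lmapDomain R R φ) ≃ₗ[R] (FiniteOrbit φ →₀ R) := by
  refine LinearEquiv.ofBijective
    (Finsupp.lcomapDomain _ (out_finiteOrbit_injective φ) ∘ₗ Submodule.subtype _) ⟨?_, ?_⟩
  · refine (injective_iff_map_eq_zero _).2 fun f hf => Subtype.ext (Finsupp.ext fun x => ?_)
    have hinv := (mem_ker_id_sub_lmapDomain_iff φ f.1).1 f.2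
    by_cases hx : {y | Quotient.mk (orbSetoid φ) y = Quotient.mk _ x}.Finite
    · rw [← (sameCycle_out_mk φ x).apply_eq_of_invariant hinv]
      exact DFunLike.congr_fun hf ⟨_, hx⟩
    · exact apply_eq_zero_of_invariant_of_infinite φ hinv hx
  · refine LinearMap.range_eq_top.1 (Submodule.eq_top_iff'.2 fun g => ?_)
    induction g using Finsupp.induction_linear with
    | zero => exact zero_mem _
    | add g g' hg hg' => exact add_mem hg hg'
    | single s r =>
      classical
      refine ⟨r • ⟨_, orbitIndicator_mem_ker R φ s⟩, Finsupp.ext fun t => ?_⟩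
      change r • orbitIndicator R φ s t.1.out = Finsupp.single s r t
      rw [orbitIndicator_apply, Quotient.out_eq, Finsupp.single_apply]
      simp [Subtype.ext_iff, eq_comm]

end Finsupp

namespace ChainComplex

universe u v

variable {R : Type u} [Ring R] (K : ChainComplex (ModuleCat.{v} R) ℕ)

noncomputable def homologyZeroIsoQuotient :
    K.homology 0 ≅ ModuleCat.of R (K.X 0 ⧸ LinearMap.range (K.d 1 0).hom) :=
  K.isoHomologyι₀ ≪≫ K.opcyclesIsoSc' 1 0 0 (by simp) (by simp) ≪≫
    (K.sc' 1 0 0).moduleCatOpcyclesIso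

noncomputable def homologySuccIsoKer (n : ℕ) (h : K.d (n + 2) (n + 1) = 0) :
    K.homology (n + 1) ≅ ModuleCat.of R (LinearMap.ker (K.d (n + 1) n).hom) :=
  (K.isoHomologyπ (n + 2) (n + 1) (by simp) h).symm ≪≫
    K.cyclesIsoSc' (n + 2) (n + 1) n (by simp) (by simp) ≪≫ (K.sc' _ _ _).moduleCatCyclesIso

end ChainComplex

section MappingTorus

variable {X : Type} (φ : X ≃ X)

theorem mappingTorusComplex_d_one_zero :
    ((mappingTorusComplex X φ).d 1 0).hom = LinearMap.id - Finsupp.lmapDomain ℤ ℤ φ :=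
  congrArg ModuleCat.Hom.hom (ChainComplex.of_d (torusModule X) (torusDiff φ) 0)

theorem mappingTorusComplex_d_two_one : (mappingTorusComplex X φ).d 2 1 = 0 :=
  ChainComplex.of_d (torusModule X) (torusDiff φ) 1

theorem isZero_mappingTorusComplex_homology (n : ℕ) (hn : 2 ≤ n) :
    Limits.IsZero ((mappingTorusComplex X φ).homology n) := by
  obtain ⟨m, rfl⟩ := Nat.exists_eq_add_of_le' hn
  exact ShortComplex.isZero_homology_of_isZero_X₂ _
    (ModuleCat.isZero_of_subsingleton (ModuleCat.of ℤ PUnit))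

end MappingTorus

/-- The homology of the mapping torus of a permutation `φ` of a set `X`:
`H₀ ≅ ℤS` for `S = X/φ` the set of orbits, `H₁ ≅ ℤS_fin` for `S_fin` the set of finite
orbits, and `H_n = 0` for `n ≥ 2`. -/
theorem mapping_torus_homology (X : Type) (φ : X ≃ X) :
    Nonempty ((mappingTorusComplex X φ).homology 0 ≅
        ModuleCat.of ℤ (_root_.Quotient (orbSetoid φ) →₀ ℤ)) ∧
    Nonempty ((mappingTorusComplex X φ).homology 1 ≅
        ModuleCat.of ℤ ({s : _root_.Quotient (orbSetoid φ) //
          {x : X | _root_.Quotient.mk (orbSetoid φ) x = s}.Finite} →₀ ℤ)) ∧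
    ∀ n : ℕ, 2 ≤ n → Limits.IsZero ((mappingTorusComplex X φ).homology n) := by
  have hd := mappingTorusComplex_d_one_zero φ
  refine ⟨⟨?_⟩, ⟨?_⟩, isZero_mappingTorusComplex_homology φ⟩
  · exact ChainComplex.homologyZeroIsoQuotient _ ≪≫
      (Submodule.quotEquivOfEq _ _ (congrArg LinearMap.range hd) ≪≫ₗ quotientRangeEquivOrbits ℤ φ).toModuleIso
  · exact ChainComplex.homologySuccIsoKer _ 0 (mappingTorusComplex_d_two_one φ) ≪≫
      (LinearEquiv.ofEq _ _ (congrArg LinearMap.ker hd) ≪≫ₗ kerEquivFiniteOrbits ℤ φ).toModuleIso
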